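/- Let k be a field of characteristic zero and c ∈ k. Let P_c = MvPolynomial (Fin 3) k with u₁ = X 0, u₂ = X 1, u₃ = X 2 and Poisson bracket ⁅p,q⁆ = c·u₁u₃·(∂₀p·∂₂q − ∂₂p·∂₀q) + c·u₂u₃·(∂₁p·∂₂q − ∂₂p·∂₁q), where ∂ᵢ = pderiv i (so ⁅u₁,u₂⁆ = 0, ⁅u₂,u₃⁆ = c·u₂u₃, ⁅u₁,u₃⁆ = c·u₁u₃). Let φ be the modular derivation, φ(f) = Σ_{j=0}^{2} pderiv j ⁅f, X j⁆. Then P_c is unimodular (φ = 0) if and only if c = 0. In particular φ(u₁) = c·u₁, φ(u₂) = c·u₂, and φ(u₃) = −2c·u₃. -/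
import Mathlib


open MvPolynomial

/-- The Poisson bracket on `P_c = k[u₁,u₂,u₃]` with
`⁅u₁,u₂⁆ = 0`, `⁅u₂,u₃⁆ = c·u₂u₃`, `⁅u₁,u₃⁆ = c·u₁u₃`. -/
noncomputable def quadBracket {k : Type*} [Field k] (c : k)
    (p q : MvPolynomial (Fin 3) k) : MvPolynomial (Fin 3) k :=
  C c * (X 0 * X 2) * (pderiv 0 p * pderiv 2 q - pderiv 2 p * pderiv 0 q) +
    C c * (X 1 * X 2) * (pderiv 1 p * pderiv 2 q - pderiv 2 p * pderiv 1 q)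

/-- The modular derivation `φ(f) = Σⱼ ∂ⱼ ⁅f, Xⱼ⁆` of `P_c`. -/
noncomputable def quadModularDerivation {k : Type*} [Field k] (c : k)
    (f : MvPolynomial (Fin 3) k) : MvPolynomial (Fin 3) k :=
  ∑ j : Fin 3, pderiv j (quadBracket c f (X j))

lemma quadMD_X0 {k : Type*} [Field k] (c : k) :
    quadModularDerivation c (X 0) = c • (X 0 : MvPolynomial (Fin 3) k) := by
  simp [quadModularDerivation, quadBracket, Fin.sum_univ_three, pderiv_X_self,
    pderiv_X_of_ne (by decide : (0:Fin 3) ≠ 2), pderiv_X_of_ne (by decide : (2:Fin 3) ≠ 0),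
    pderiv_X_of_ne (by decide : (0:Fin 3) ≠ 1), pderiv_X_of_ne (by decide : (1:Fin 3) ≠ 0),
    pderiv_X_of_ne (by decide : (1:Fin 3) ≠ 2), pderiv_X_of_ne (by decide : (2:Fin 3) ≠ 1),
    smul_eq_C_mul]

lemma quadMD_X1 {k : Type*} [Field k] (c : k) :
    quadModularDerivation c (X 1) = c • (X 1 : MvPolynomial (Fin 3) k) := by
  simp [quadModularDerivation, quadBracket, Fin.sum_univ_three, pderiv_X_self,
    pderiv_X_of_ne (by decide : (0:Fin 3) ≠ 2), pderiv_X_of_ne (by decide : (2:Fin 3) ≠ 0),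
    pderiv_X_of_ne (by decide : (0:Fin 3) ≠ 1), pderiv_X_of_ne (by decide : (1:Fin 3) ≠ 0),
    pderiv_X_of_ne (by decide : (1:Fin 3) ≠ 2), pderiv_X_of_ne (by decide : (2:Fin 3) ≠ 1),
    smul_eq_C_mul]

lemma quadMD_X2 {k : Type*} [Field k] (c : k) :
    quadModularDerivation c (X 2) = (-(2 * c)) • (X 2 : MvPolynomial (Fin 3) k) := by
  simp [quadModularDerivation, quadBracket, Fin.sum_univ_three, pderiv_X_self,
    pderiv_X_of_ne (by decide : (0:Fin 3) ≠ 2), pderiv_X_of_ne (by decide : (2:Fin 3) ≠ 0),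
    pderiv_X_of_ne (by decide : (0:Fin 3) ≠ 1), pderiv_X_of_ne (by decide : (1:Fin 3) ≠ 0),
    pderiv_X_of_ne (by decide : (1:Fin 3) ≠ 2), pderiv_X_of_ne (by decide : (2:Fin 3) ≠ 1),
    smul_eq_C_mul, map_mul, map_ofNat]
  ring

/-- `P_c` is unimodular iff `c = 0`; in particular `φ(u₁) = c·u₁`, `φ(u₂) = c·u₂` and
`φ(u₃) = −2c·u₃`. -/
theorem quad_unimodular_iff {k : Type*} [Field k] [CharZero k] (c : k) :
    ((∀ f : MvPolynomial (Fin 3) k, quadModularDerivation c f = 0) ↔ c = 0) ∧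
    quadModularDerivation c (X 0) = c • (X 0 : MvPolynomial (Fin 3) k) ∧
    quadModularDerivation c (X 1) = c • (X 1 : MvPolynomial (Fin 3) k) ∧
    quadModularDerivation c (X 2) = (-(2 * c)) • (X 2 : MvPolynomial (Fin 3) k) := by
  refine ⟨⟨fun h => ?_, fun h f => ?_⟩, quadMD_X0 c, quadMD_X1 c, quadMD_X2 c⟩
  · have := (quadMD_X0 c).symm.trans (h (X 0))
    rcases smul_eq_zero.mp this with h' | h'
    · exact h'
    · exact absurd h' (X_ne_zero 0)
  · subst h
    simp [quadModularDerivation, quadBracket]
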